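/- arXiv:2405.03511 — 2 statements merged into one kernel-verified Lean document; each statement's English description precedes it below -/
import Mathlib

section
/- Let φ = ψ₁ ∧ … ∧ ψ_k be a propositional CNF over variables x₁,…,xₙ in which no variable occurs both positively and negatively in a clause. Using 2n atoms A₁,Ā₁,…,Aₙ,Āₙ, define E⁺ = {D₀, D₀′, D₁,…,Dₙ} by: D₀ = {Aᵢ(1), Āᵢ(1) | 1 ≤ i ≤ n}; D₀′ = {Aᵢ(2), Āᵢ(2) | 1 ≤ i ≤ n}; and Dᵢ = {Aᵢ(1), Āᵢ(2)} ∪ {Aⱼ(1), Āⱼ(1), Aⱼ(2), Āⱼ(2) | j ≠ i}. Define E⁻ = {D¹₁,…,D¹_k, D²₁,…,D²ₙ} by: D¹ᵢ contains Āⱼ(1) whenever xⱼ does not occur negatively in ψᵢ and Aⱼ(1) whenever xⱼ does not occur positively in ψᵢ; and D²ᵢ = {Aⱼ(1), Āⱼ(1) | j ≠ i}. For a truth assignment a to x₁,…,xₙ let ρ_a = {Aᵢ | a(xᵢ) = 1} ∪ {Āᵢ | a(xᵢ) = 0}. Then: (i) for every assignment a satisfying φ, the query ◇ρ_a separates E =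 (E⁺,E⁻); (ii) every path ○◇-query q that separates E satisfies q ≡ ◇ρ_a for some assignment a satisfying φ. -/
/-- Atoms are natural numbers (a countably infinite supply). -/
abbrev Atom : Type := ℕ

/-- A (temporal) data instance: a finite set of facts `(A, ℓ)`, i.e. `A(ℓ)`. -/
abbrev Inst : Type := Finset (Atom × ℕ)

/-- LTL queries built from atoms and ⊤ using ∧, ○ (next) and ◇ (strict eventually). -/
inductive Query : Type where
  | top : Query
  | atom : Atom → Query
  | and : Query → Query → Query
  | next : Query → Query
  | evtl : Query → Query
  deriving DecidableEq

/-- Strict semantics: `Query.sat D q m` says `D, m ⊨ q`. -/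
def Query.sat (D : Inst) : Query → ℕ → Prop
  | .top, _ => True
  | .atom a, m => (a, m) ∈ D
  | .and q₁ q₂, m => Query.sat D q₁ m ∧ Query.sat D q₂ m
  | .next q, m => Query.sat D q (m + 1)
  | .evtl q, m => ∃ m', m < m' ∧ Query.sat D q m'

/-- `q ⊨ q'`: every (nonempty) data instance satisfying `q` at 0 satisfies `q'` at 0. -/
def Entails (q q' : Query) : Prop :=
  ∀ D : Inst, D.Nonempty → Query.sat D q 0 → Query.sat D q' 0

/-- `q ≡ q'`. -/
def QEquiv (q q' : Query) : Prop := Entails q q' ∧ Entails q' q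

/-- Temporal operators ○ (next) and ◇ (eventually). -/
inductive TOp : Type where
  | next : TOp
  | evtl : TOp
  deriving DecidableEq

def TOp.apply : TOp → Query → Query
  | .next, q => Query.next q
  | .evtl, q => Query.evtl q

/-- Conjunction of a finite set of atoms (the empty set standing for ⊤). -/
noncomputable def conjQ (ρ : Finset Atom) : Query :=
  ρ.toList.foldr (fun a q => Query.and (Query.atom a) q) Query.top

/-- `pathFrom ρ o i k` is the path query `ρᵢ ∧ o_{i+1}(ρ_{i+1} ∧ ⋯ ∧ o_{i+k} ρ_{i+k})`. -/
noncomputable def pathFrom (ρ : ℕ → Finset Atom) (o : ℕ → TOp) : ℕ → ℕ → Query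
  | i, 0 => conjQ (ρ i)
  | i, k + 1 => Query.and (conjQ (ρ i)) ((o (i + 1)).apply (pathFrom ρ o (i + 1) k))

/-- The path ○◇-query `ρ₀ ∧ o₁(ρ₁ ∧ ⋯ ∧ oₙ ρₙ)`. -/
noncomputable def pathQ (n : ℕ) (ρ : ℕ → Finset Atom) (o : ℕ → TOp) : Query := pathFrom ρ o 0 n

/-- `q` separates the example set `(E⁺, E⁻)`. -/
def Separates (Ep En : Finset Inst) (q : Query) : Prop :=
  (∀ D ∈ Ep, Query.sat D q 0) ∧ ∀ D ∈ En, ¬ Query.sat D q 0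

/-- The atom `Aᵢ` for variable `xᵢ`. -/
def pa (i : ℕ) : Atom := 2 * i

/-- The atom `Āᵢ` for variable `xᵢ`. -/
def na (i : ℕ) : Atom := 2 * i + 1

/-- `D₀ = {Aᵢ(1), Āᵢ(1) | 1 ≤ i ≤ n}` (variables indexed `0,…,n-1`). -/
def D₀ (n : ℕ) : Inst := (Finset.range n).biUnion fun i => {(pa i, 1), (na i, 1)}

/-- `D₀′ = {Aᵢ(2), Āᵢ(2) | 1 ≤ i ≤ n}`. -/
def D₀' (n : ℕ) : Inst := (Finset.range n).biUnion fun i => {(pa i, 2), (na i, 2)}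

/-- `Dᵢ = {Aᵢ(1), Āᵢ(2)} ∪ {Aⱼ(1), Āⱼ(1), Aⱼ(2), Āⱼ(2) | j ≠ i}`. -/
def Dv (n i : ℕ) : Inst :=
  {(pa i, 1), (na i, 2)} ∪
    ((Finset.range n).biUnion fun j =>
      if j = i then ∅ else {(pa j, 1), (na j, 1), (pa j, 2), (na j, 2)})

/-- `D¹ᵢ`: contains `Āⱼ(1)` whenever `xⱼ` does not occur negatively in clause `ψᵢ` and
`Aⱼ(1)` whenever `xⱼ` does not occur positively in `ψᵢ`. -/
def Dc (n : ℕ) (pos neg : Finset ℕ) : Inst :=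
  (((Finset.range n).filter fun j => j ∉ neg).image fun j => (na j, 1)) ∪
  (((Finset.range n).filter fun j => j ∉ pos).image fun j => (pa j, 1))

/-- `D²ᵢ = {Aⱼ(1), Āⱼ(1) | j ≠ i}`. -/
def D₂ (n i : ℕ) : Inst :=
  (Finset.range n).biUnion fun j => if j = i then ∅ else {(pa j, 1), (na j, 1)}

/-- `ρ_a = {Aᵢ | a(xᵢ) = 1} ∪ {Āᵢ | a(xᵢ) = 0}`. -/
def rhoA (n : ℕ) (a : ℕ → Bool) : Finset Atom :=
  (Finset.range n).image fun i => if a i then pa i else na i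

/-- The positive examples. -/
def EpSAT (n : ℕ) : Finset Inst := {D₀ n, D₀' n} ∪ (Finset.range n).image (Dv n)

/-- The negative examples. -/
def EnSAT (n k : ℕ) (pos neg : ℕ → Finset ℕ) : Finset Inst :=
  ((Finset.range k).image fun i => Dc n (pos i) (neg i)) ∪
    (Finset.range n).image (D₂ n)

/-- Assignment `a` satisfies the CNF `ψ₀ ∧ … ∧ ψ_{k-1}` given by `pos`, `neg`. -/
def SatAssign (n k : ℕ) (pos neg : ℕ → Finset ℕ) (a : ℕ → Bool) : Prop :=
  ∀ i < k, (∃ x ∈ pos i, a x = true) ∨ ∃ x ∈ neg i, a x = false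
section Aux
open Finset

lemma foldr_sat (D : Inst) (l : List Atom) (t : ℕ) :
    Query.sat D (l.foldr (fun a q => Query.and (Query.atom a) q) Query.top) t ↔
      ∀ a ∈ l, (a, t) ∈ D := by
  induction l with
  | nil => simp [Query.sat]
  | cons a l ih => simp [Query.sat, ih]

lemma conjQ_sat (D : Inst) (ρ : Finset Atom) (t : ℕ) :
    Query.sat D (conjQ ρ) t ↔ ∀ a ∈ ρ, (a, t) ∈ D := by
  rw [conjQ, foldr_sat]
  simp

lemma evtl_conj_sat (D : Inst) (ρ : Finset Atom) (t : ℕ) :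
    Query.sat D (Query.evtl (conjQ ρ)) t ↔ ∃ t', t < t' ∧ ∀ a ∈ ρ, (a, t') ∈ D := by
  show (∃ t', t < t' ∧ Query.sat D (conjQ ρ) t') ↔ _
  simp [conjQ_sat]

lemma pathFrom_facts (D : Inst) (ρ : ℕ → Finset Atom) (o : ℕ → TOp) :
    ∀ (κ i t : ℕ), Query.sat D (pathFrom ρ o i κ) t →
      ∀ j, i ≤ j → j ≤ i + κ →
        ∃ t', t + (j - i) ≤ t' ∧ (j = i → t' = t) ∧ ∀ a ∈ ρ j, (a, t') ∈ D := by
  intro κ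
  induction κ with
  | zero =>
    intro i t h j hij hji
    obtain rfl : j = i := by omega
    exact ⟨t, by omega, fun _ => rfl, (conjQ_sat D _ t).1 h⟩
  | succ κ ih =>
    intro i t h j hij hji
    obtain ⟨h1, h2⟩ := h
    rcases eq_or_lt_of_le hij with rfl | hlt
    · exact ⟨t, by omega, fun _ => rfl, (conjQ_sat D _ t).1 h1⟩
    · have htail : ∃ t'', t < t'' ∧ Query.sat D (pathFrom ρ o (i + 1) κ) t'' := by
        cases ho : o (i + 1) with
        | next =>
          rw [ho] at h2
          exact ⟨t + 1, by omega, h2⟩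
        | evtl =>
          rw [ho] at h2
          exact h2
      obtain ⟨t'', ht'', hsat⟩ := htail
      obtain ⟨t', h1', h2', h3'⟩ := ih (i + 1) t'' hsat j (by omega) (by omega)
      exact ⟨t', by omega, fun h => absurd h (by omega), h3'⟩

lemma pathFrom_sat_of (D : Inst) (ρ : ℕ → Finset Atom) (o : ℕ → TOp) :
    ∀ (κ i t : ℕ), (∀ a ∈ ρ i, (a, t) ∈ D) →
      (∀ j, i < j → j ≤ i + κ → ρ j = ∅) →
      Query.sat D (pathFrom ρ o i κ) t := by
  intro κ
  induction κ with
  | zero => intro i t h _; exact (conjQ_sat D (ρ i) t).2 h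
  | succ κ ih =>
    intro i t h hemp
    refine ⟨(conjQ_sat D (ρ i) t).2 h, ?_⟩
    have hnext : ∀ t', Query.sat D (pathFrom ρ o (i + 1) κ) t' := by
      intro t'
      refine ih (i + 1) t' ?_ ?_
      · have := hemp (i + 1) (by omega) (by omega)
        simp [this]
      · intro j hj hj'; exact hemp j (by omega) (by omega)
    cases ho : o (i + 1) with
    | next => show Query.sat D (Query.next _) t; exact hnext (t + 1)
    | evtl => exact ⟨t + 1, by omega, hnext (t + 1)⟩

end Aux
section Mem
open Finset

lemma mem_D₀ (n : ℕ) (x t : ℕ) :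
    (x, t) ∈ D₀ n ↔ t = 1 ∧ ∃ i < n, x = pa i ∨ x = na i := by
  simp [D₀, Prod.ext_iff]
  aesop

lemma mem_D₀' (n : ℕ) (x t : ℕ) :
    (x, t) ∈ D₀' n ↔ t = 2 ∧ ∃ i < n, x = pa i ∨ x = na i := by
  simp [D₀', Prod.ext_iff]
  aesop

lemma mem_Dv (n i : ℕ) (x t : ℕ) :
    (x, t) ∈ Dv n i ↔ (x = pa i ∧ t = 1) ∨ (x = na i ∧ t = 2) ∨
      ∃ j < n, j ≠ i ∧ (x = pa j ∨ x = na j) ∧ (t = 1 ∨ t = 2) := by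
  simp [Dv, Prod.ext_iff]
  aesop

lemma mem_Dc (n : ℕ) (P N : Finset ℕ) (x t : ℕ) :
    (x, t) ∈ Dc n P N ↔ t = 1 ∧
      ∃ j < n, (x = na j ∧ j ∉ N) ∨ (x = pa j ∧ j ∉ P) := by
  simp [Dc, Prod.ext_iff]
  aesop

lemma mem_D₂ (n i : ℕ) (x t : ℕ) :
    (x, t) ∈ D₂ n i ↔ t = 1 ∧ ∃ j < n, j ≠ i ∧ (x = pa j ∨ x = na j) := by
  simp [D₂, Prod.ext_iff]
  aesop

lemma mem_rhoA (n : ℕ) (a : ℕ → Bool) (x : Atom) :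
    x ∈ rhoA n a ↔ ∃ i < n, x = if a i then pa i else na i := by
  simp [rhoA]
  aesop

lemma D₀_mem_Ep (n : ℕ) : D₀ n ∈ EpSAT n := by
  simp [EpSAT]

lemma D₀'_mem_Ep (n : ℕ) : D₀' n ∈ EpSAT n := by
  simp [EpSAT]

lemma Dv_mem_Ep (n i : ℕ) (hi : i < n) : Dv n i ∈ EpSAT n := by
  simp [EpSAT]
  right; right; exact ⟨i, hi, rfl⟩

lemma Dc_mem_En (n k : ℕ) (pos neg : ℕ → Finset ℕ) (i : ℕ) (hi : i < k) :
    Dc n (pos i) (neg i) ∈ EnSAT n k pos neg := by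
  simp [EnSAT]
  left; exact ⟨i, hi, rfl⟩

lemma D₂_mem_En (n k : ℕ) (pos neg : ℕ → Finset ℕ) (i : ℕ) (hi : i < n) :
    D₂ n i ∈ EnSAT n k pos neg := by
  simp [EnSAT]
  right; exact ⟨i, hi, rfl⟩

end Mem
section Atoms

lemma pa_eq_pa {i j : ℕ} : pa i = pa j ↔ i = j := by simp [pa]

lemma na_eq_na {i j : ℕ} : na i = na j ↔ i = j := by simp [na]

lemma pa_ne_na {i j : ℕ} : pa i ≠ na j := by
  show (2 * i : ℕ) ≠ 2 * j + 1
  omega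

end Atoms

lemma part_i (n k : ℕ) (pos neg : ℕ → Finset ℕ)
    (hpos : ∀ i < k, pos i ⊆ Finset.range n)
    (hneg : ∀ i < k, neg i ⊆ Finset.range n)
    (a : ℕ → Bool) (ha : SatAssign n k pos neg a) :
    Separates (EpSAT n) (EnSAT n k pos neg) (Query.evtl (conjQ (rhoA n a))) := by
  constructor
  · intro D hD
    rw [EpSAT, Finset.mem_union] at hD
    rcases hD with hD | hD
    · rcases Finset.mem_insert.1 hD with rfl | hD
      · rw [evtl_conj_sat]
        refine ⟨1, one_pos, ?_⟩
        intro x hx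
        obtain ⟨i, hi, rfl⟩ := (mem_rhoA n a x).1 hx
        rw [mem_D₀]
        refine ⟨rfl, i, hi, ?_⟩
        by_cases h : a i <;> simp [h]
      · rw [Finset.mem_singleton] at hD
        subst hD
        rw [evtl_conj_sat]
        refine ⟨2, by omega, ?_⟩
        intro x hx
        obtain ⟨i, hi, rfl⟩ := (mem_rhoA n a x).1 hx
        rw [mem_D₀']
        refine ⟨rfl, i, hi, ?_⟩
        by_cases h : a i <;> simp [h]
    · obtain ⟨i, hi, rfl⟩ := Finset.mem_image.1 hD
      rw [Finset.mem_range] at hi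
      rw [evtl_conj_sat]
      refine ⟨if a i then 1 else 2, by split <;> omega, ?_⟩
      intro x hx
      obtain ⟨j, hj, rfl⟩ := (mem_rhoA n a x).1 hx
      rw [mem_Dv]
      by_cases hji : j = i
      · subst hji
        by_cases h : a j <;> simp [h]
      · refine Or.inr (Or.inr ⟨j, hj, hji, ?_, ?_⟩)
        · by_cases h : a j <;> simp [h]
        · by_cases h : a i <;> simp [h]
  · intro D hD hsat
    rw [EnSAT, Finset.mem_union] at hD
    rw [evtl_conj_sat] at hsat
    obtain ⟨t', ht', hsub⟩ := hsat
    rcases hD with hD | hD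
    · obtain ⟨i, hi, rfl⟩ := Finset.mem_image.1 hD
      rw [Finset.mem_range] at hi
      rcases ha i hi with ⟨x, hx, hax⟩ | ⟨x, hx, hax⟩
      · have hxn : x < n := Finset.mem_range.1 (hpos i hi hx)
        have hmem : pa x ∈ rhoA n a := (mem_rhoA n a _).2 ⟨x, hxn, by simp [hax]⟩
        have := (mem_Dc n (pos i) (neg i) (pa x) t').1 (hsub _ hmem)
        obtain ⟨-, j, hj, h⟩ := this
        rcases h with ⟨h1, -⟩ | ⟨h1, h2⟩
        · exact pa_ne_na h1
        · exact h2 (pa_eq_pa.1 h1 ▸ hx)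
      · have hxn : x < n := Finset.mem_range.1 (hneg i hi hx)
        have hmem : na x ∈ rhoA n a := (mem_rhoA n a _).2 ⟨x, hxn, by simp [hax]⟩
        have := (mem_Dc n (pos i) (neg i) (na x) t').1 (hsub _ hmem)
        obtain ⟨-, j, hj, h⟩ := this
        rcases h with ⟨h1, h2⟩ | ⟨h1, -⟩
        · exact h2 (na_eq_na.1 h1 ▸ hx)
        · exact pa_ne_na h1.symm
    · obtain ⟨i, hi, rfl⟩ := Finset.mem_image.1 hD
      rw [Finset.mem_range] at hi
      have hmem : (if a i then pa i else na i) ∈ rhoA n a :=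
        (mem_rhoA n a _).2 ⟨i, hi, rfl⟩
      have := (mem_D₂ n i _ t').1 (hsub _ hmem)
      obtain ⟨-, j, hj, hji, h⟩ := this
      rcases h with h | h <;> by_cases hai : a i <;> simp [hai] at h
      · exact hji (pa_eq_pa.1 h.symm)
      · exact pa_ne_na h.symm
      · exact pa_ne_na h
      · exact hji (na_eq_na.1 h.symm)
lemma taut_sat (m : ℕ) (ρ : ℕ → Finset Atom) (o : ℕ → TOp)
    (h : ∀ j ≤ m, ρ j = ∅) (D : Inst) (t : ℕ) : Query.sat D (pathQ m ρ o) t :=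
  pathFrom_sat_of D ρ o m 0 t (by simp [h 0 (by omega)])
    (fun j _ hj' => h j (by omega))

lemma main_fwd (m : ℕ) (ρ : ℕ → Finset Atom) (o : ℕ → TOp) (D : Inst) (hm : 1 ≤ m)
    (h : Query.sat D (pathQ m ρ o) 0) :
    ∃ t', 0 < t' ∧ ∀ x ∈ ρ 1, (x, t') ∈ D := by
  obtain ⟨t', h1, _, h3⟩ := pathFrom_facts D ρ o m 0 0 h 1 (by omega) (by omega)
  exact ⟨t', by omega, h3⟩

lemma main_bwd (m : ℕ) (ρ : ℕ → Finset Atom) (o : ℕ → TOp) (D : Inst) (hm : 1 ≤ m)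
    (ho : o 1 = TOp.evtl) (hρ0 : ρ 0 = ∅) (hemp : ∀ j, 2 ≤ j → j ≤ m → ρ j = ∅)
    (h : ∃ t', 0 < t' ∧ ∀ x ∈ ρ 1, (x, t') ∈ D) :
    Query.sat D (pathQ m ρ o) 0 := by
  obtain ⟨m', rfl⟩ : ∃ m', m = m' + 1 := ⟨m - 1, by omega⟩
  obtain ⟨t', ht', hf⟩ := h
  show Query.sat D (Query.and (conjQ (ρ 0)) ((o 1).apply (pathFrom ρ o 1 m'))) 0
  refine ⟨(conjQ_sat _ _ _).2 (by simp [hρ0]), ?_⟩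
  rw [ho]
  exact ⟨t', ht',
    pathFrom_sat_of D ρ o m' 1 t' hf (fun j hj hj' => hemp j (by omega) (by omega))⟩
lemma part_ii (n k : ℕ) (pos neg : ℕ → Finset ℕ)
    (m : ℕ) (ρ : ℕ → Finset Atom) (o : ℕ → TOp)
    (hsep : Separates (EpSAT n) (EnSAT n k pos neg) (pathQ m ρ o)) :
    ∃ a : ℕ → Bool, SatAssign n k pos neg a ∧
      QEquiv (pathQ m ρ o) (Query.evtl (conjQ (rhoA n a))) := by
  classical
  have hD0 : Query.sat (D₀ n) (pathQ m ρ o) 0 := hsep.1 _ (D₀_mem_Ep n)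
  have hρ0 : ρ 0 = ∅ := by
    obtain ⟨t', _, ht2, hf⟩ := pathFrom_facts _ ρ o m 0 0 hD0 0 le_rfl (by omega)
    rw [Finset.eq_empty_iff_forall_notMem]
    intro x hx
    have := (mem_D₀ n x t').1 (hf x hx)
    omega
  have hhigh : ∀ j, 2 ≤ j → j ≤ m → ρ j = ∅ := by
    intro j hj hjm
    obtain ⟨t', ht1, _, hf⟩ := pathFrom_facts _ ρ o m 0 0 hD0 j (by omega) (by omega)
    rw [Finset.eq_empty_iff_forall_notMem]
    intro x hx
    have := (mem_D₀ n x t').1 (hf x hx)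
    omega
  -- the tautology situation
  have htautcase : (∀ j ≤ m, ρ j = ∅) →
      ∃ a : ℕ → Bool, SatAssign n k pos neg a ∧
        QEquiv (pathQ m ρ o) (Query.evtl (conjQ (rhoA n a))) := by
    intro hall
    have htaut := taut_sat m ρ o hall
    have hk : k = 0 := by
      by_contra hk
      exact hsep.2 _ (Dc_mem_En n k pos neg 0 (by omega)) (htaut _ 0)
    have hn : n = 0 := by
      by_contra hn
      exact hsep.2 _ (D₂_mem_En n k pos neg 0 (by omega)) (htaut _ 0)
    subst hk; subst hn
    refine ⟨fun _ => true, fun i hik => absurd hik (by omega), ?_, ?_⟩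
    · intro D _ _
      rw [evtl_conj_sat]
      refine ⟨1, one_pos, fun x hx => ?_⟩
      obtain ⟨i, hi, -⟩ := (mem_rhoA 0 _ x).1 hx
      omega
    · intro D _ _
      exact htaut D 0
  rcases Nat.eq_zero_or_pos m with rfl | hm
  · refine htautcase (fun j hj => ?_)
    obtain rfl : j = 0 := by omega
    exact hρ0
  by_cases hρ1 : ρ 1 = ∅
  · refine htautcase (fun j hj => ?_)
    rcases Nat.lt_or_ge j 2 with h2 | h2
    · interval_cases j
      · exact hρ0
      · exact hρ1
    · exact hhigh j h2 hj
  -- main case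
  have hρ1sub : ∀ x ∈ ρ 1, ∃ i < n, x = pa i ∨ x = na i := by
    intro x hx
    obtain ⟨t', ht1, _, hf⟩ := pathFrom_facts _ ρ o m 0 0 hD0 1 (by omega) (by omega)
    obtain ⟨-, i, hi, h⟩ := (mem_D₀ n x t').1 (hf x hx)
    exact ⟨i, hi, h⟩
  have ho1 : o 1 = TOp.evtl := by
    cases h1 : o 1 with
    | evtl => rfl
    | next =>
      exfalso
      have hD0' : Query.sat (D₀' n) (pathQ m ρ o) 0 := hsep.1 _ (D₀'_mem_Ep n)
      obtain ⟨m', rfl⟩ : ∃ m', m = m' + 1 := ⟨m - 1, by omega⟩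
      obtain ⟨-, h2⟩ : Query.sat (D₀' n)
          (Query.and (conjQ (ρ 0)) ((o 1).apply (pathFrom ρ o 1 m'))) 0 := hD0'
      rw [h1] at h2
      have h3 : Query.sat (D₀' n) (pathFrom ρ o 1 m') 1 := h2
      obtain ⟨t', _, ht2, hf⟩ := pathFrom_facts _ ρ o m' 1 1 h3 1 le_rfl (by omega)
      obtain ⟨x, hx⟩ := Finset.nonempty_iff_ne_empty.2 hρ1
      have := (mem_D₀' n x t').1 (hf x hx)
      omega
  have hequiv : ∀ D : Inst, Query.sat D (pathQ m ρ o) 0 ↔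
      ∃ t', 0 < t' ∧ ∀ x ∈ ρ 1, (x, t') ∈ D :=
    fun D => ⟨main_fwd m ρ o D hm, main_bwd m ρ o D hm ho1 hρ0 hhigh⟩
  set a : ℕ → Bool := fun i => decide (pa i ∈ ρ 1) with ha_def
  have haT : ∀ j, a j = true ↔ pa j ∈ ρ 1 := by intro j; simp [ha_def]
  have haF : ∀ j, a j = false ↔ pa j ∉ ρ 1 := by intro j; simp [ha_def]
  have hDv : ∀ i, i < n → ¬(pa i ∈ ρ 1 ∧ na i ∈ ρ 1) := by
    rintro i hi ⟨hp, hn⟩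
    obtain ⟨t', ht', hf⟩ := (hequiv _).1 (hsep.1 _ (Dv_mem_Ep n i hi))
    have h1 := (mem_Dv n i _ _).1 (hf _ hp)
    have h2 := (mem_Dv n i _ _).1 (hf _ hn)
    have ht1 : t' = 1 := by
      rcases h1 with ⟨-, h⟩ | ⟨h, -⟩ | ⟨j, _, hji, h, -⟩
      · exact h
      · exact absurd h pa_ne_na
      · rcases h with h | h
        · exact absurd (pa_eq_pa.1 h).symm hji
        · exact absurd h pa_ne_na
    have ht2 : t' = 2 := by
      rcases h2 with ⟨h, -⟩ | ⟨-, h⟩ | ⟨j, _, hji, h, -⟩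
      · exact absurd h.symm pa_ne_na
      · exact h
      · rcases h with h | h
        · exact absurd h.symm pa_ne_na
        · exact absurd (na_eq_na.1 h).symm hji
    omega
  have hD₂ : ∀ i, i < n → pa i ∈ ρ 1 ∨ na i ∈ ρ 1 := by
    intro i hi
    by_contra hc
    push_neg at hc
    apply hsep.2 _ (D₂_mem_En n k pos neg i hi)
    rw [hequiv]
    refine ⟨1, one_pos, fun x hx => ?_⟩
    obtain ⟨j, hjn, hj⟩ := hρ1sub x hx
    rw [mem_D₂]
    refine ⟨rfl, j, hjn, ?_, hj⟩
    rintro rfl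
    rcases hj with rfl | rfl
    · exact hc.1 hx
    · exact hc.2 hx
  have hra : ρ 1 = rhoA n a := by
    ext x
    rw [mem_rhoA]
    constructor
    · intro hx
      obtain ⟨j, hjn, hj⟩ := hρ1sub x hx
      refine ⟨j, hjn, ?_⟩
      rcases hj with rfl | rfl
      · rw [if_pos ((haT j).2 hx)]
      · rw [if_neg ?_]
        intro h
        exact hDv j hjn ⟨(haT j).1 h, hx⟩
    · rintro ⟨j, hjn, rfl⟩
      by_cases h : pa j ∈ ρ 1
      · rw [if_pos ((haT j).2 h)]; exact h
      · rw [if_neg (fun hh => h ((haT j).1 hh))]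
        exact (hD₂ j hjn).resolve_left h
  have hsa : SatAssign n k pos neg a := by
    intro i hik
    by_contra hc
    push_neg at hc
    apply hsep.2 _ (Dc_mem_En n k pos neg i hik)
    rw [hequiv]
    refine ⟨1, one_pos, fun x hx => ?_⟩
    obtain ⟨j, hjn, hj⟩ := hρ1sub x hx
    rw [mem_Dc]
    refine ⟨rfl, j, hjn, ?_⟩
    rcases hj with rfl | rfl
    · refine Or.inr ⟨rfl, fun hmem => ?_⟩
      exact hc.1 j hmem ((haT j).2 hx)
    · refine Or.inl ⟨rfl, fun hmem => ?_⟩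
      refine hc.2 j hmem ((haF j).2 ?_)
      intro hpj
      exact hDv j hjn ⟨hpj, hx⟩
  refine ⟨a, hsa, ?_, ?_⟩
  · intro D _ hq
    rw [evtl_conj_sat, ← hra]
    exact (hequiv D).1 hq
  · intro D _ hq
    rw [evtl_conj_sat, ← hra] at hq
    exact (hequiv D).2 hq

/-- (i) For every satisfying assignment `a`, `◇ρ_a` separates
`E = (E⁺, E⁻)`; (ii) every path ○◇-query separating `E` is equivalent to `◇ρ_a` for
some satisfying assignment `a`. -/
theorem statement_14 (n k : ℕ) (pos neg : ℕ → Finset ℕ)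
    (hpos : ∀ i < k, pos i ⊆ Finset.range n) (hneg : ∀ i < k, neg i ⊆ Finset.range n)
    (hdisj : ∀ i < k, Disjoint (pos i) (neg i)) :
    (∀ a : ℕ → Bool, SatAssign n k pos neg a →
        Separates (EpSAT n) (EnSAT n k pos neg) (Query.evtl (conjQ (rhoA n a)))) ∧
    (∀ (m : ℕ) (ρ : ℕ → Finset Atom) (o : ℕ → TOp),
        Separates (EpSAT n) (EnSAT n k pos neg) (pathQ m ρ o) →
        ∃ a : ℕ → Bool, SatAssign n k pos neg a ∧
          QEquiv (pathQ m ρ o) (Query.evtl (conjQ (rhoA n a)))) := by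
  exact ⟨fun a ha => part_i n k pos neg hpos hneg a ha,
    fun m ρ o hsep => part_ii n k pos neg m ρ o hsep⟩
end

section
/- Let 𝒬 be one of 𝒬_p[◇], 𝒬_p[○◇], 𝒬_in. Let E₁ = (E₁⁺,E₁⁻) and E₂ = (E₂⁺,E₂⁻) be example sets whose signatures are disjoint and such that every query in s(E₁,𝒬) and every query in s(E₂,𝒬) starts with ◇ (i.e., has ρ₀ = ⊤ and o₁ = ◇). Define E = (E⁺,E⁻) by E⁺ = {D₁·D₂, D₂·D₁ | D₁ ∈ E₁⁺, D₂ ∈ E₂⁺}, where · denotes concatenation of the associated words, and E⁻ = E₁⁻ ∪ E₂⁻. Then s(E,𝒬) = s(E₁,𝒬) ∪ s(E₂,𝒬). -/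
/-- Operators of an interval query: `o₁ = ◇`, `oᵢ = ○` for `i > 1`. -/
def intervalOps : ℕ → TOp := fun i => if i ≤ 1 then TOp.evtl else TOp.next

/-- `𝒬_p[○◇]`: all path ○◇-queries. -/
def Qpall : Set Query :=
  {q | ∃ (n : ℕ) (ρ : ℕ → Finset Atom) (o : ℕ → TOp), q = pathQ n ρ o}

/-- `𝒬_p[◇]`: all path ◇-queries. -/
def Qpdall : Set Query :=
  {q | ∃ (n : ℕ) (ρ : ℕ → Finset Atom), q = pathQ n ρ fun _ => TOp.evtl}

/-- `𝒬_in`: all interval queries. -/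
def Qinall : Set Query :=
  {q | ∃ (n : ℕ) (ρ : ℕ → Finset Atom), 1 ≤ n ∧ ρ 0 = ∅ ∧ ρ 1 ≠ ∅ ∧
        q = pathQ n ρ intervalOps}

/-- The maximal timestamp of a data instance. -/
def maxT (D : Inst) : ℕ := D.sup Prod.snd

/-- Concatenation `D · D'` of the words associated with two data instances. -/
def concatD (D D' : Inst) : Inst :=
  D ∪ D'.image fun p => (p.1, p.2 + (maxT D + 1))

/-- The signature of a data instance. -/
def sigD (D : Inst) : Finset Atom := D.image Prod.fst

/-- The signature of an example set. -/
def sigE (Ep En : Finset Inst) : Finset Atom := (Ep ∪ En).sup sigD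

/-- `s(E, Q)`: the separators of `E = (E⁺, E⁻)` in the class `Q`. -/
def sepSet (Ep En : Finset Inst) (Q : Set Query) : Set Query :=
  {q ∈ Q | Separates Ep En q}

/-- `q` starts with ◇, i.e. `q` has the shape `⊤ ∧ ◇(⋯)` (`ρ₀ = ⊤` and `o₁ = ◇`). -/
def startsWithEvtl (q : Query) : Prop :=
  ∃ q', q = Query.and Query.top (Query.evtl q')
/-! ### Auxiliary lemmas -/

/-- Atoms occurring in a query. -/
def atomsQ : Query → Finset Atom
  | .top => ∅
  | .atom a => {a}
  | .and q₁ q₂ => atomsQ q₁ ∪ atomsQ q₂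
  | .next q => atomsQ q
  | .evtl q => atomsQ q

lemma sat_mono {D D' : Inst} (h : D ⊆ D') :
    ∀ (q : Query) (m : ℕ), Query.sat D q m → Query.sat D' q m := by
  intro q
  induction q with
  | top => intro m _; trivial
  | atom a => intro m hm; exact h hm
  | and q₁ q₂ ih₁ ih₂ => intro m hm; exact ⟨ih₁ m hm.1, ih₂ m hm.2⟩
  | next q ih => intro m hm; exact ih (m + 1) hm
  | evtl q ih => intro m hm; obtain ⟨m', h1, h2⟩ := hm; exact ⟨m', h1, ih m' h2⟩

lemma sat_congr {D D' : Inst} :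
    ∀ (q : Query), (∀ a ∈ atomsQ q, ∀ t, ((a, t) ∈ D ↔ (a, t) ∈ D')) →
    ∀ m, (Query.sat D q m ↔ Query.sat D' q m) := by
  intro q
  induction q with
  | top => intro _ m; exact Iff.rfl
  | atom a => intro h m; exact h a (by simp [atomsQ]) m
  | and q₁ q₂ ih₁ ih₂ =>
      intro h m
      have h₁ := ih₁ (fun a ha => h a (by simp [atomsQ, ha]))
      have h₂ := ih₂ (fun a ha => h a (by simp [atomsQ, ha]))
      exact and_congr (h₁ m) (h₂ m)
  | next q ih => intro h m; exact ih h (m + 1)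
  | evtl q ih =>
      intro h m
      exact exists_congr fun m' => and_congr Iff.rfl (ih h m')

lemma sat_shift {D : Inst} (s : ℕ) :
    ∀ (q : Query) (m : ℕ), Query.sat D q m →
      Query.sat (D.image fun p => (p.1, p.2 + s)) q (m + s) := by
  intro q
  induction q with
  | top => intro m _; trivial
  | atom a => intro m hm; exact Finset.mem_image.mpr ⟨(a, m), hm, rfl⟩
  | and q₁ q₂ ih₁ ih₂ => intro m hm; exact ⟨ih₁ m hm.1, ih₂ m hm.2⟩
  | next q ih =>
      intro m hm
      have := ih (m + 1) hm
      show Query.sat _ q (m + s + 1)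
      have e : m + 1 + s = m + s + 1 := by omega
      rwa [e] at this
  | evtl q ih =>
      intro m hm
      obtain ⟨m', h1, h2⟩ := hm
      exact ⟨m' + s, by omega, ih m' h2⟩

lemma sat_foldr {D : Inst} {l : List Atom} {m : ℕ} :
    Query.sat D (l.foldr (fun a q => Query.and (Query.atom a) q) Query.top) m ↔
      ∀ a ∈ l, (a, m) ∈ D := by
  induction l with
  | nil => simp [Query.sat]
  | cons a l ih => simp [Query.sat, ih]

lemma sat_conjQ {D : Inst} {ρ : Finset Atom} {m : ℕ} :
    Query.sat D (conjQ ρ) m ↔ ∀ a ∈ ρ, (a, m) ∈ D := by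
  rw [conjQ, sat_foldr]
  simp [Finset.mem_toList]

lemma conjQ_empty : conjQ (∅ : Finset Atom) = Query.top := by
  simp [conjQ]

lemma atomsQ_foldr {l : List Atom} {a : Atom}
    (h : a ∈ atomsQ (l.foldr (fun b q => Query.and (Query.atom b) q) Query.top)) :
    a ∈ l := by
  induction l with
  | nil => simp [atomsQ] at h
  | cons b l ih =>
      simp only [List.foldr, atomsQ, Finset.mem_union, Finset.mem_singleton] at h
      rcases h with h | h
      · simp [h]
      · simp [ih h]

lemma atomsQ_conjQ {ρ : Finset Atom} {a : Atom} (h : a ∈ atomsQ (conjQ ρ)) : a ∈ ρ := by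
  rw [conjQ] at h
  exact Finset.mem_toList.mp (atomsQ_foldr h)

lemma atomsQ_apply (op : TOp) (q : Query) : atomsQ (op.apply q) = atomsQ q := by
  cases op <;> rfl

lemma atomsQ_pathFrom {ρ : ℕ → Finset Atom} {o : ℕ → TOp} :
    ∀ (k i : ℕ) (a : Atom), a ∈ atomsQ (pathFrom ρ o i k) → ∃ j ≤ k, a ∈ ρ (i + j) := by
  intro k
  induction k with
  | zero =>
      intro i a ha
      rw [pathFrom] at ha
      exact ⟨0, le_rfl, by simpa using atomsQ_conjQ ha⟩
  | succ k ih =>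
      intro i a ha
      rw [pathFrom] at ha
      simp only [atomsQ, Finset.mem_union, atomsQ_apply] at ha
      rcases ha with ha | ha
      · exact ⟨0, by omega, by simpa using atomsQ_conjQ ha⟩
      · obtain ⟨j, hj, hja⟩ := ih (i + 1) a ha
        exact ⟨j + 1, by omega, by rwa [show i + (j + 1) = i + 1 + j by omega]⟩

lemma sat_trivial {D : Inst} {ρ : ℕ → Finset Atom} {o : ℕ → TOp} :
    ∀ (k i m : ℕ), (∀ j ≤ k, ρ (i + j) = ∅) → Query.sat D (pathFrom ρ o i k) m := by
  intro k
  induction k with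
  | zero =>
      intro i m h
      rw [pathFrom, sat_conjQ]
      intro a ha
      rw [show i = i + 0 by omega, h 0 le_rfl] at ha
      simp at ha
  | succ k ih =>
      intro i m h
      rw [pathFrom]
      refine ⟨?_, ?_⟩
      · rw [sat_conjQ]; intro a ha
        rw [show i = i + 0 by omega, h 0 (by omega)] at ha
        simp at ha
      · have htail : ∀ j ≤ k, ρ (i + 1 + j) = ∅ := by
          intro j hj
          rw [show i + 1 + j = i + (j + 1) by omega]
          exact h (j + 1) (by omega)
        cases ho : o (i + 1) with
        | next => exact ih (i + 1) (m + 1) htail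
        | evtl => exact ⟨m + 1, by omega, ih (i + 1) (m + 1) htail⟩

lemma chain_mono {g : ℕ → ℕ} {k : ℕ} (h : ∀ j < k, g j < g (j + 1)) :
    ∀ {a b : ℕ}, a < b → b ≤ k → g a < g b := by
  intro a b
  induction b with
  | zero => omega
  | succ b ih =>
      intro hab hbk
      rcases Nat.lt_succ_iff_lt_or_eq.mp hab with h' | h'
      · exact (ih h' (by omega)).trans (h b (by omega))
      · subst h'; exact h a (by omega)

lemma pathFrom_match {D : Inst} {ρ : ℕ → Finset Atom} {o : ℕ → TOp} :
    ∀ (k i m : ℕ), Query.sat D (pathFrom ρ o i k) m →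
      ∃ g : ℕ → ℕ, g 0 = m ∧ (∀ j < k, g j < g (j + 1)) ∧
        ∀ j ≤ k, ∀ a ∈ ρ (i + j), (a, g j) ∈ D := by
  intro k
  induction k with
  | zero =>
      intro i m h
      rw [pathFrom, sat_conjQ] at h
      refine ⟨fun _ => m, rfl, by omega, ?_⟩
      intro j hj a ha
      interval_cases j
      exact h a ha
  | succ k ih =>
      intro i m h
      rw [pathFrom] at h
      obtain ⟨h0, h1⟩ := h
      have hex : ∃ m', m < m' ∧ Query.sat D (pathFrom ρ o (i + 1) k) m' := by
        cases ho : o (i + 1) with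
        | next => rw [ho] at h1; exact ⟨m + 1, by omega, h1⟩
        | evtl => rw [ho] at h1; exact h1
      obtain ⟨m', hm', hsat⟩ := hex
      obtain ⟨g, hg0, hgm, hgf⟩ := ih (i + 1) m' hsat
      refine ⟨fun j => if j = 0 then m else g (j - 1), by simp, ?_, ?_⟩
      · intro j hj
        rcases Nat.eq_zero_or_pos j with rfl | hjp
        · simpa [hg0] using hm'
        · have h1j : j ≠ 0 := by omega
          have h2j : j + 1 ≠ 0 := by omega
          simp only [h1j, h2j, if_neg, if_false]
          have := hgm (j - 1) (by omega)
          rwa [show j - 1 + 1 = j + 1 - 1 by omega] at this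
      · intro j hj a ha
        rcases Nat.eq_zero_or_pos j with rfl | hjp
        · simp only [if_pos rfl]
          rw [sat_conjQ] at h0
          exact h0 a (by simpa using ha)
        · have h1j : j ≠ 0 := by omega
          simp only [h1j, if_false]
          have := hgf (j - 1) (by omega) a
            (by rwa [show i + 1 + (j - 1) = i + j by omega])
          exact this

lemma mem_time_le_maxT {D : Inst} {a : Atom} {t : ℕ} (h : (a, t) ∈ D) : t ≤ maxT D :=
  Finset.le_sup (f := Prod.snd) h

lemma mem_sigD {D : Inst} {a : Atom} {t : ℕ} (h : (a, t) ∈ D) : a ∈ sigD D :=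
  Finset.mem_image.mpr ⟨(a, t), h, rfl⟩

lemma sigD_le_sigE {D : Inst} {Ep En : Finset Inst} (h : D ∈ Ep ∪ En) :
    sigD D ⊆ sigE Ep En :=
  Finset.le_sup (f := sigD) h

lemma concat_cases {A B : Inst} {x : Atom} {t : ℕ} (h : (x, t) ∈ concatD A B) :
    (x, t) ∈ A ∨ (x ∈ sigD B ∧ maxT A < t) := by
  rcases Finset.mem_union.mp h with h | h
  · exact Or.inl h
  · right
    obtain ⟨p, hp, he⟩ := Finset.mem_image.mp h
    refine ⟨Finset.mem_image.mpr ⟨p, hp, congrArg Prod.fst he⟩, ?_⟩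
    have := congrArg Prod.snd he
    simp at this
    omega

lemma concat_left {A B : Inst} {x : Atom} {t : ℕ} (h : (x, t) ∈ concatD A B)
    (hx : x ∉ sigD B) : (x, t) ∈ A := by
  rcases concat_cases h with h | ⟨h, _⟩
  · exact h
  · exact absurd h hx

lemma concat_right {A B : Inst} {x : Atom} {t : ℕ} (h : (x, t) ∈ concatD A B)
    (hx : x ∉ sigD A) : maxT A < t := by
  rcases concat_cases h with h | ⟨_, h⟩
  · exact absurd (mem_sigD h) hx
  · exact h
lemma sat_concat_right {q : Query} {D₁ D₂ : Inst} (hst : startsWithEvtl q)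
    (h : Query.sat D₁ q 0) : Query.sat (concatD D₂ D₁) q 0 := by
  obtain ⟨q', rfl⟩ := hst
  obtain ⟨-, m, hm, hs⟩ := h
  refine ⟨trivial, m + (maxT D₂ + 1), by omega, ?_⟩
  exact sat_mono Finset.subset_union_right _ _ (sat_shift (maxT D₂ + 1) q' m hs)

lemma rho_empty {n : ℕ} {ρ : ℕ → Finset Atom} {o : ℕ → TOp} {D₁ D : Inst}
    {S₁ S₂ : Finset Atom}
    (h1 : Query.sat D₁ (pathQ n ρ o) 0) (h2 : Query.sat D (pathQ n ρ o) 0)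
    (hsub1 : sigD D₁ ⊆ S₁) (hsub2 : sigD D ⊆ S₂) (hdisj : Disjoint S₁ S₂) :
    ∀ i ≤ n, ρ i = ∅ := by
  intro i hi
  obtain ⟨g, -, -, hf⟩ := pathFrom_match n 0 0 h1
  obtain ⟨g', -, -, hf'⟩ := pathFrom_match n 0 0 h2
  rw [Finset.eq_empty_iff_forall_notMem]
  intro a ha
  have m1 : a ∈ S₁ := hsub1 (mem_sigD (hf i hi a (by simpa using ha)))
  have m2 : a ∈ S₂ := hsub2 (mem_sigD (hf' i hi a (by simpa using ha)))
  exact Finset.disjoint_left.mp hdisj m1 m2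

lemma top_mem {Q : Set Query} (hQ : Q = Qpdall ∨ Q = Qpall) : Query.top ∈ Q := by
  have hpq : pathQ 0 (fun _ => (∅ : Finset Atom)) (fun _ => TOp.evtl) = Query.top := by
    rw [pathQ, pathFrom, conjQ_empty]
  rcases hQ with rfl | rfl
  · exact ⟨0, fun _ => ∅, hpq.symm⟩
  · exact ⟨0, fun _ => ∅, fun _ => TOp.evtl, hpq.symm⟩

lemma neg_other {Q : Set Query} (hQ : Q = Qpdall ∨ Q = Qpall ∨ Q = Qinall)
    {Ep₁ En₁ Ep₂ En₂ : Finset Inst} (hEp₁ : Ep₁.Nonempty)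
    (hdisj : Disjoint (sigE Ep₁ En₁) (sigE Ep₂ En₂))
    (hs₁ : ∀ q ∈ sepSet Ep₁ En₁ Q, startsWithEvtl q)
    {q : Query} (hq : q ∈ sepSet Ep₁ En₁ Q) {D : Inst} (hD : D ∈ En₂) :
    ¬ Query.sat D q 0 := by
  intro hsat
  obtain ⟨D₁, hD₁⟩ := hEp₁
  obtain ⟨hqQ, hsep⟩ := hq
  have hsatD₁ : Query.sat D₁ q 0 := hsep.1 D₁ hD₁
  have hsub1 : sigD D₁ ⊆ sigE Ep₁ En₁ := sigD_le_sigE (Finset.mem_union_left _ hD₁)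
  have hsub2 : sigD D ⊆ sigE Ep₂ En₂ := sigD_le_sigE (Finset.mem_union_right _ hD)
  have hcase : (Q = Qpdall ∨ Q = Qpall) ∨ Q = Qinall := by tauto
  rcases hcase with hQ' | rfl
  · -- get a representation
    have hrep : ∃ n ρ o, q = pathQ n ρ o := by
      rcases hQ' with rfl | rfl
      · obtain ⟨n, ρ, h⟩ := hqQ; exact ⟨n, ρ, _, h⟩
      · exact hqQ
    obtain ⟨n, ρ, o, rfl⟩ := hrep
    have hemp : ∀ i ≤ n, ρ i = ∅ := rho_empty hsatD₁ hsat hsub1 hsub2 hdisj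
    rcases En₁.eq_empty_or_nonempty with hE | ⟨D', hD'⟩
    · have htop : Query.top ∈ sepSet Ep₁ En₁ Q := by
        refine ⟨top_mem hQ', fun D _ => trivial, ?_⟩
        simp [hE]
      obtain ⟨q', hq'⟩ := hs₁ _ htop
      exact Query.noConfusion hq'
    · refine hsep.2 D' hD' ?_
      exact sat_trivial n 0 0 (fun j hj => by simpa using hemp j hj)
  · obtain ⟨n, ρ, hn, hρ0, hρ1, rfl⟩ := hqQ
    have hemp : ∀ i ≤ n, ρ i = ∅ := rho_empty hsatD₁ hsat hsub1 hsub2 hdisj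
    exact hρ1 (hemp 1 hn)

lemma side_lemma {Ep₁ En₁ Ep₂ En₂ : Finset Inst} {D₂0 : Inst} (hD₂0 : D₂0 ∈ Ep₂)
    (hdisj : Disjoint (sigE Ep₁ En₁) (sigE Ep₂ En₂))
    {n : ℕ} {ρ : ℕ → Finset Atom} {o : ℕ → TOp}
    (hpos : ∀ D₁ ∈ Ep₁, ∀ D₂ ∈ Ep₂, Query.sat (concatD D₁ D₂) (pathQ n ρ o) 0 ∧
            Query.sat (concatD D₂ D₁) (pathQ n ρ o) 0)
    {i : ℕ} {a : Atom} (hi : i ≤ n) (ha : a ∈ ρ i) (haE : a ∈ sigE Ep₁ En₁) :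
    ∀ D₁ ∈ Ep₁, Query.sat D₁ (pathQ n ρ o) 0 := by
  intro D₁ hD₁
  obtain ⟨h12, h21⟩ := hpos D₁ hD₁ D₂0 hD₂0
  obtain ⟨g, hg0, hgm, hgf⟩ := pathFrom_match n 0 0 h12
  obtain ⟨g', hg0', hgm', hgf'⟩ := pathFrom_match n 0 0 h21
  have haE2 : a ∉ sigE Ep₂ En₂ := Finset.disjoint_left.mp hdisj haE
  have ha2 : a ∉ sigD D₂0 := fun h => haE2 (sigD_le_sigE (Finset.mem_union_left _ hD₂0) h)
  have key : ∀ j ≤ n, ∀ b ∈ ρ j, b ∉ sigE Ep₂ En₂ := by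
    intro j hj b hb hbE2
    have hb1 : b ∉ sigD D₁ := fun h =>
      Finset.disjoint_left.mp hdisj (sigD_le_sigE (Finset.mem_union_left _ hD₁) h) hbE2
    -- first concatenation: i < j
    have haD : (a, g i) ∈ concatD D₁ D₂0 := hgf i hi a (by simpa using ha)
    have hbD : (b, g j) ∈ concatD D₁ D₂0 := hgf j hj b (by simpa using hb)
    have hgi : g i ≤ maxT D₁ := mem_time_le_maxT (concat_left haD ha2)
    have hgj : maxT D₁ < g j := concat_right hbD hb1
    have hij : i < j := by
      by_contra hcon
      push_neg at hcon
      rcases Nat.lt_or_ge j i with h' | h'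
      · have := chain_mono hgm h' hi; omega
      · have : j = i := by omega
        subst this; omega
    -- second concatenation: j < i
    have haD' : (a, g' i) ∈ concatD D₂0 D₁ := hgf' i hi a (by simpa using ha)
    have hbD' : (b, g' j) ∈ concatD D₂0 D₁ := hgf' j hj b (by simpa using hb)
    have hgj' : g' j ≤ maxT D₂0 := mem_time_le_maxT (concat_left hbD' hb1)
    have hgi' : maxT D₂0 < g' i := concat_right haD' ha2
    have hji : j < i := by
      by_contra hcon
      push_neg at hcon
      rcases Nat.lt_or_ge i j with h' | h'
      · have := chain_mono hgm' h' hj; omega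
      · have : i = j := by omega
        subst this; omega
    omega
  -- transfer satisfaction from the concatenation to D₁
  refine (sat_congr (pathQ n ρ o) ?_ 0).mp h12
  intro b hb t
  obtain ⟨j, hj, hbj⟩ := atomsQ_pathFrom n 0 b hb
  have hbE2 : b ∉ sigE Ep₂ En₂ := key j (by simpa using hj) b (by simpa using hbj)
  have hb2 : b ∉ sigD D₂0 := fun h => hbE2 (sigD_le_sigE (Finset.mem_union_left _ hD₂0) h)
  constructor
  · intro hmem; exact concat_left hmem hb2
  · intro hmem; exact Finset.mem_union_left _ hmem
lemma rep_of_mem {Q : Set Query} (hQ : Q = Qpdall ∨ Q = Qpall ∨ Q = Qinall) {q : Query}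
    (hq : q ∈ Q) : ∃ n ρ o, q = pathQ n ρ o := by
  rcases hQ with rfl | rfl | rfl
  · obtain ⟨n, ρ, h⟩ := hq; exact ⟨n, ρ, _, h⟩
  · exact hq
  · obtain ⟨n, ρ, -, -, -, h⟩ := hq; exact ⟨n, ρ, _, h⟩

theorem statement_15' (Q : Set Query) (hQ : Q = Qpdall ∨ Q = Qpall ∨ Q = Qinall)
    (Ep₁ En₁ Ep₂ En₂ : Finset Inst)
    (hEp₁ : Ep₁.Nonempty) (hEp₂ : Ep₂.Nonempty)
    (hne₁ : ∀ D ∈ Ep₁ ∪ En₁, D.Nonempty) (hne₂ : ∀ D ∈ Ep₂ ∪ En₂, D.Nonempty)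
    (hdisj : Disjoint (sigE Ep₁ En₁) (sigE Ep₂ En₂))
    (hs₁ : ∀ q ∈ sepSet Ep₁ En₁ Q, startsWithEvtl q)
    (hs₂ : ∀ q ∈ sepSet Ep₂ En₂ Q, startsWithEvtl q) :
    sepSet (Ep₁.biUnion fun D₁ => Ep₂.biUnion fun D₂ => {concatD D₁ D₂, concatD D₂ D₁})
        (En₁ ∪ En₂) Q
      = sepSet Ep₁ En₁ Q ∪ sepSet Ep₂ En₂ Q := by
  ext q
  simp only [sepSet, Separates, Set.mem_setOf_eq, Set.mem_union]
  constructor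
  · rintro ⟨hqQ, hpos, hneg⟩
    have hneg₁ : ∀ D ∈ En₁, ¬ Query.sat D q 0 := fun D hD =>
      hneg D (Finset.mem_union_left _ hD)
    have hneg₂ : ∀ D ∈ En₂, ¬ Query.sat D q 0 := fun D hD =>
      hneg D (Finset.mem_union_right _ hD)
    obtain ⟨n, ρ, o, rfl⟩ := rep_of_mem hQ hqQ
    obtain ⟨D₁0, hD₁0⟩ := hEp₁
    obtain ⟨D₂0, hD₂0⟩ := hEp₂
    have hpos' : ∀ D₁ ∈ Ep₁, ∀ D₂ ∈ Ep₂,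
        Query.sat (concatD D₁ D₂) (pathQ n ρ o) 0 ∧
        Query.sat (concatD D₂ D₁) (pathQ n ρ o) 0 := by
      intro D₁ h₁ D₂ h₂
      constructor <;>
      · apply hpos
        refine Finset.mem_biUnion.mpr ⟨D₁, h₁, Finset.mem_biUnion.mpr ⟨D₂, h₂, ?_⟩⟩
        simp
    by_cases hall : ∀ i ≤ n, ρ i = ∅
    · left
      exact ⟨hqQ, fun D _ => sat_trivial n 0 0 (fun j hj => by simpa using hall j hj), hneg₁⟩
    · push_neg at hall
      obtain ⟨i, hi, hρi⟩ := hall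
      obtain ⟨a, ha⟩ := hρi
      obtain ⟨g, -, -, hgf⟩ := pathFrom_match n 0 0 (hpos' D₁0 hD₁0 D₂0 hD₂0).1
      have haD : (a, g i) ∈ concatD D₁0 D₂0 := hgf i hi a (by simpa using ha)
      have hamem : a ∈ sigE Ep₁ En₁ ∨ a ∈ sigE Ep₂ En₂ := by
        rcases concat_cases haD with h | ⟨h, -⟩
        · exact Or.inl (sigD_le_sigE (Finset.mem_union_left _ hD₁0) (mem_sigD h))
        · exact Or.inr (sigD_le_sigE (Finset.mem_union_left _ hD₂0) h)
      rcases hamem with haE | haE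
      · exact Or.inl ⟨hqQ, side_lemma hD₂0 hdisj hpos' hi ha haE, hneg₁⟩
      · refine Or.inr ⟨hqQ, ?_, hneg₂⟩
        have hpos'' : ∀ D₂ ∈ Ep₂, ∀ D₁ ∈ Ep₁,
            Query.sat (concatD D₂ D₁) (pathQ n ρ o) 0 ∧
            Query.sat (concatD D₁ D₂) (pathQ n ρ o) 0 := fun D₂ h₂ D₁ h₁ =>
          ⟨(hpos' D₁ h₁ D₂ h₂).2, (hpos' D₁ h₁ D₂ h₂).1⟩
        exact side_lemma hD₁0 hdisj.symm hpos'' hi ha haE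
  · rintro (⟨hqQ, hpos, hneg⟩ | ⟨hqQ, hpos, hneg⟩)
    · refine ⟨hqQ, ?_, ?_⟩
      · intro D hD
        simp only [Finset.mem_biUnion, Finset.mem_insert, Finset.mem_singleton] at hD
        obtain ⟨D₁, hD₁, D₂, hD₂, rfl | rfl⟩ := hD
        · exact sat_mono Finset.subset_union_left q 0 (hpos D₁ hD₁)
        · exact sat_concat_right (hs₁ q ⟨hqQ, hpos, hneg⟩) (hpos D₁ hD₁)
      · intro D hD
        rcases Finset.mem_union.mp hD with h | h
        · exact hneg D h
        · exact neg_other hQ hEp₁ hdisj hs₁ ⟨hqQ, hpos, hneg⟩ h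
    · refine ⟨hqQ, ?_, ?_⟩
      · intro D hD
        simp only [Finset.mem_biUnion, Finset.mem_insert, Finset.mem_singleton] at hD
        obtain ⟨D₁, hD₁, D₂, hD₂, rfl | rfl⟩ := hD
        · exact sat_concat_right (hs₂ q ⟨hqQ, hpos, hneg⟩) (hpos D₂ hD₂)
        · exact sat_mono Finset.subset_union_left q 0 (hpos D₂ hD₂)
      · intro D hD
        rcases Finset.mem_union.mp hD with h | h
        · exact neg_other hQ hEp₂ hdisj.symm hs₂ ⟨hqQ, hpos, hneg⟩ h
        · exact hneg D h

/-- If `E₁`, `E₂` have disjoint signatures and all their separators in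
`Q ∈ {𝒬_p[◇], 𝒬_p[○◇], 𝒬_in}` start with ◇, then the separators of the combined example
set are exactly `s(E₁,Q) ∪ s(E₂,Q)`. -/
theorem statement_15 (Q : Set Query) (hQ : Q = Qpdall ∨ Q = Qpall ∨ Q = Qinall)
    (Ep₁ En₁ Ep₂ En₂ : Finset Inst)
    (hEp₁ : Ep₁.Nonempty) (hEp₂ : Ep₂.Nonempty)
    (hne₁ : ∀ D ∈ Ep₁ ∪ En₁, D.Nonempty) (hne₂ : ∀ D ∈ Ep₂ ∪ En₂, D.Nonempty)
    (hdisj : Disjoint (sigE Ep₁ En₁) (sigE Ep₂ En₂))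
    (hs₁ : ∀ q ∈ sepSet Ep₁ En₁ Q, startsWithEvtl q)
    (hs₂ : ∀ q ∈ sepSet Ep₂ En₂ Q, startsWithEvtl q) :
    sepSet (Ep₁.biUnion fun D₁ => Ep₂.biUnion fun D₂ => {concatD D₁ D₂, concatD D₂ D₁})
        (En₁ ∪ En₂) Q
      = sepSet Ep₁ En₁ Q ∪ sepSet Ep₂ En₂ Q := by
  exact statement_15' Q hQ Ep₁ En₁ Ep₂ En₂ hEp₁ hEp₂ hne₁ hne₂ hdisj hs₁ hs₂
end
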